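/- Let G be a regular finite simple connected graph with d+1 distinct adjacency eigenvalues and girth g. If g ≥ 2d−1, then G is distance-regular. -/

import Mathlib

open Polynomial Finset

noncomputable section

namespace DRG

variable {V : Type*} [Fintype V] [DecidableEq V]

/-- The sphere of radius `i` around `u`: the set of vertices at distance `i` from `u`. -/
def sphere (G : SimpleGraph V) (u : V) (i : ℕ) : Finset V :=
  Finset.univ.filter (fun w => G.dist u w = i)

/-- The intersection parameter `c_i(u,v) = |S_{i-1}(u) ∩ S_1(v)|`. -/
def cNum (G : SimpleGraph V) (i : ℕ) (u v : V) : ℕ :=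
  (sphere G u (i - 1) ∩ sphere G v 1).card

/-- The intersection parameter `a_i(u,v) = |S_i(u) ∩ S_1(v)|`. -/
def aNum (G : SimpleGraph V) (i : ℕ) (u v : V) : ℕ :=
  (sphere G u i ∩ sphere G v 1).card

/-- The intersection parameter `b_i(u,v) = |S_{i+1}(u) ∩ S_1(v)|`. -/
def bNum (G : SimpleGraph V) (i : ℕ) (u v : V) : ℕ :=
  (sphere G u (i + 1) ∩ sphere G v 1).card

/-- A graph is distance-regular if for every `i` the numbers `c_i(u,v)`, `a_i(u,v)`,
`b_i(u,v)` do not depend on the pair of vertices `u, v` at distance `i`. -/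
def IsDistanceRegular (G : SimpleGraph V) : Prop :=
  ∀ i : ℕ, ∀ u v u' v' : V, G.dist u v = i → G.dist u' v' = i →
    cNum G i u v = cNum G i u' v' ∧ aNum G i u v = aNum G i u' v' ∧
      bNum G i u v = bNum G i u' v'

/-- The odd-girth of a graph: the length of a shortest odd cycle (`⊤` if none exists). -/
def oddGirth {W : Type*} (G : SimpleGraph W) : ℕ∞ :=
  ⨅ (v : W) (w : {w : G.Walk v v // w.IsCycle ∧ Odd w.length}), (w.1.length : ℕ∞)

/-- A generalized Odd graph: a distance-regular graph with diameter `D` and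
odd-girth `2D+1`. -/
def IsGeneralizedOddGraph (G : SimpleGraph V) : Prop :=
  IsDistanceRegular G ∧ oddGirth G = ((2 * G.diam + 1 : ℕ) : ℕ∞)

/-- The distance-`i` matrix of a graph. -/
def distMatrix (G : SimpleGraph V) (i : ℕ) : Matrix V V ℝ :=
  Matrix.of fun u v => if G.dist u v = i then (1 : ℝ) else 0

/-- The adjacency matrix of `G`, as an endomorphism of `V → ℝ`. -/
def adjEnd (G : SimpleGraph V) [DecidableRel G.Adj] : Module.End ℝ (V → ℝ) :=
  Matrix.toLin' (G.adjMatrix ℝ)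

/-- The multiplicity of `x` as an eigenvalue of the adjacency matrix of `G`. -/
def evMult (G : SimpleGraph V) [DecidableRel G.Adj] (x : ℝ) : ℕ :=
  Module.finrank ℝ (Module.End.eigenspace (adjEnd G) x)

/-- `G` has exactly `k` distinct adjacency eigenvalues. -/
def HasDistinctEigenvalues (G : SimpleGraph V) [DecidableRel G.Adj] (k : ℕ) : Prop :=
  ∃ s : Finset ℝ, s.card = k ∧ ∀ x : ℝ, x ∈ s ↔ Module.End.HasEigenvalue (adjEnd G) x

/-- The scalar product `⟨p,q⟩_G = (1/n) ∑_i m_i p(λ_i) q(λ_i)` associated to a graph `G`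
with distinct eigenvalues `lam 0 > lam 1 > ⋯ > lam d`. -/
def dotG (G : SimpleGraph V) [DecidableRel G.Adj] (d : ℕ) (lam : ℕ → ℝ)
    (p q : Polynomial ℝ) : ℝ :=
  (1 / (Fintype.card V : ℝ)) *
    ∑ i ∈ Finset.range (d + 1), (evMult G (lam i) : ℝ) * p.eval (lam i) * q.eval (lam i)

/-- The spectral data of a connected graph `G` with `d+1` distinct adjacency eigenvalues
`lam 0 > lam 1 > ⋯ > lam d`, together with its predistance polynomials `p 0, …, p d`
(of degree `i`, orthogonal w.r.t. `⟨·,·⟩_G`, normalized by `⟨p i, p i⟩_G = pᵢ(λ₀)`) and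
its preintersection numbers `alpha i`, `beta i`, `gamma i`, which are the coefficients
in the three-term recurrence `x pᵢ = βᵢ₋₁ pᵢ₋₁ + αᵢ pᵢ + γᵢ₊₁ pᵢ₊₁`
(with the conventions `p₋₁ = p_{d+1} = 0`, `β₋₁ = γ_{d+1} = 0`, `γ₀ = 0`, `β_d = 0`). -/
structure PreData (G : SimpleGraph V) [DecidableRel G.Adj] (d : ℕ) where
  lam : ℕ → ℝ
  lam_strictAnti : ∀ i j : ℕ, i < j → j ≤ d → lam j < lam i
  lam_hasEigen : ∀ i ≤ d, Module.End.HasEigenvalue (adjEnd G) (lam i)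
  lam_complete : ∀ x : ℝ, Module.End.HasEigenvalue (adjEnd G) x → ∃ i ≤ d, lam i = x
  p : ℕ → Polynomial ℝ
  alpha : ℕ → ℝ
  beta : ℕ → ℝ
  gamma : ℕ → ℝ
  p_degree : ∀ i ≤ d, (p i).degree = i
  p_orth : ∀ i ≤ d, ∀ j ≤ d, i ≠ j → dotG G d lam (p i) (p j) = 0
  p_norm : ∀ i ≤ d, dotG G d lam (p i) (p i) = (p i).eval (lam 0)
  gamma_zero : gamma 0 = 0
  beta_d : beta d = 0
  p_top : p (d + 1) = 0
  recur_zero : X * p 0 = C (alpha 0) * p 0 + C (gamma 1) * p 1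
  recur : ∀ i : ℕ, 1 ≤ i → i ≤ d →
    X * p i = C (beta (i - 1)) * p (i - 1) + C (alpha i) * p i + C (gamma (i + 1)) * p (i + 1)

/-- `G` is `m`-partially distance-regular (w.r.t. its predistance polynomials):
`pᵢ(A) = Aᵢ` for all `i ≤ m`. -/
def IsPartiallyDR (G : SimpleGraph V) [DecidableRel G.Adj] {d : ℕ}
    (pd : PreData G d) (m : ℕ) : Prop :=
  ∀ i ≤ m, Polynomial.aeval (G.adjMatrix ℝ) (pd.p i) = distMatrix G i

/-- The pairs of vertices at distance `i`. -/
def distPairs (G : SimpleGraph V) (i : ℕ) : Finset (V × V) :=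
  Finset.univ.filter (fun uv : V × V => G.dist uv.1 uv.2 = i)

/-- The average `c̄_i` of `c_i(u,v)` over all ordered pairs of vertices at distance `i`. -/
def avgC (G : SimpleGraph V) (i : ℕ) : ℝ :=
  (∑ uv ∈ distPairs G i, (cNum G i uv.1 uv.2 : ℝ)) / ((distPairs G i).card : ℝ)

/-- The average of `c_i(u,v)²` over all ordered pairs of vertices at distance `i`. -/
def avgC2 (G : SimpleGraph V) (i : ℕ) : ℝ :=
  (∑ uv ∈ distPairs G i, ((cNum G i uv.1 uv.2 : ℝ)) ^ 2) / ((distPairs G i).card : ℝ)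

/-- The average of `a_i(u,v)²` over all ordered pairs of vertices at distance `i`. -/
def avgA2 (G : SimpleGraph V) (i : ℕ) : ℝ :=
  (∑ uv ∈ distPairs G i, ((aNum G i uv.1 uv.2 : ℝ)) ^ 2) / ((distPairs G i).card : ℝ)

/-- The average of `a_i(u,v) · c_i(u,v)` over all ordered pairs at distance `i`. -/
def avgAC (G : SimpleGraph V) (i : ℕ) : ℝ :=
  (∑ uv ∈ distPairs G i, (aNum G i uv.1 uv.2 : ℝ) * (cNum G i uv.1 uv.2 : ℝ)) /
    ((distPairs G i).card : ℝ)

/-- The average number `k̄_i = (1/n) ∑_u |S_i(u)|` of vertices at distance `i`. -/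
def kbar (G : SimpleGraph V) (i : ℕ) : ℝ :=
  (∑ u : V, ((sphere G u i).card : ℝ)) / (Fintype.card V : ℝ)

end DRG

end

/-! Let `A` be the adjacency matrix and `k = θ₀, θ₁, …, θ_d` its eigenvalues. Since `A` is
symmetric, `∏ᵢ (A - θᵢ) = 0`, so the diameter is at most `d`; and the Hoffman polynomial
`q = ∏_{i ≥ 1} (X - θᵢ)`, monic of degree `d`, satisfies `A q(A) = k q(A)`, so for a connected
regular graph the columns of the symmetric matrix `q(A)` are constant: `q(A) = γ J`.

Girth `≥ 2d - 1` makes geodesics of length `i < d` unique and rules out walks of length `l`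
between vertices at distance `i` with `l + i` odd and `< 2d - 1`. Hence for `n < d`,
`(Aⁿ)ᵤ_w = [dist(u,w) = n]` whenever `dist(u,w) ≥ n - 1`, and counting the neighbours of `v`
gives `c_i(u,v) = (Aⁱ)ᵤᵥ` for `1 ≤ i ≤ d` and `a_i(u,v) = (Aⁱ⁺¹)ᵤᵥ` for `i < d`. By the same
two facts these entries are `1`, resp. `0`, except for those of `A^d` at distance `d` and
`d - 1`, which `q(A) = γ J` expresses through `γ` and the coefficients of `q`. Finally
`b_i = k - c_i - a_i`, and `b_d = 0` gives `a_d`. -/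

open Matrix SimpleGraph

theorem Matrix.IsSymm.aeval {n R : Type*} [Fintype n] [DecidableEq n] [CommSemiring R]
    {A : Matrix n n R} (hA : A.IsSymm) (p : R[X]) : (aeval A p).IsSymm := by
  simp only [IsSymm, aeval_eq_sum_range, transpose_sum, transpose_smul, (hA.pow _).eq]

theorem Matrix.IsHermitian.aeval_prod_X_sub_C_eq_zero {n : Type*} [Fintype n] [DecidableEq n]
    {A : Matrix n n ℝ} (hA : A.IsHermitian) {s : Finset ℝ} (hs : spectrum ℝ A ⊆ s) :
    aeval A (∏ μ ∈ s, (X - C μ)) = 0 := by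
  have hev (i : n) : aeval (hA.eigenvalues i) (∏ μ ∈ s, (X - C μ)) = 0 := by
    simpa [eval_prod, sub_eq_zero] using
      prod_eq_zero (hs (hA.eigenvalues_mem_spectrum_real i)) (sub_self _)
  rw [hA.spectral_theorem, aeval_algHom_apply, ← diagonalAlgHom_apply (R := ℝ),
    aeval_algHom_apply, aeval_pi_apply]
  simp [hev]

namespace SimpleGraph

variable {V : Type*} {G : SimpleGraph V}

/-- Induction on `p`. If the first step `u ~ w` of `p` lands on `q`, either the rest of `p`
and the part of `q` after `w` still have odd total length, or the part of `q` up to `w` is a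
path of even length, closing a cycle with the edge `uw`. Otherwise prepend `wu` to `q`. -/
theorem Walk.egirth_le_length_add_length_of_odd [DecidableEq V] {u v : V} (p q : G.Walk u v)
    (hq : q.IsPath) (hodd : Odd (p.length + q.length)) :
    G.egirth ≤ (p.length + q.length : ℕ) := by
  induction p with
  | nil =>
    rw [isPath_iff_nil.mp hq |>.eq_nil] at hodd
    simp at hodd
  | @cons u w v h p ih =>
    rw [length_cons] at hodd ⊢
    by_cases hw : w ∈ q.support
    · have hlen : (q.takeUntil w hw).length + (q.dropUntil w hw).length = q.length := by
        rw [← length_append, take_spec]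
      by_cases hodd' : Odd (p.length + (q.dropUntil w hw).length)
      · exact (ih _ (hq.dropUntil hw) hodd').trans (by norm_cast; omega)
      · have hne : q.takeUntil w hw ≠ cons h nil := fun heq => by
          have := congrArg length heq
          simp only [length_cons, length_nil] at this
          grind
        obtain ⟨_, _, _, c, hc, hcl⟩ := (hq.takeUntil hw).exists_isCycle_length_le_add_of_ne
          (IsPath.nil.cons (by simpa using h.ne)) hne
        exact (egirth_le_length hc).trans
          (by simp only [length_cons, length_nil] at hcl; norm_cast; omega)
    · have := ih (cons h.symm q) (hq.cons hw) (by simpa [add_assoc, add_comm 1] using hodd)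
      simpa [add_assoc, add_comm 1] using this

variable [Fintype V] [DecidableEq V] [DecidableRel G.Adj] {u v : V} {n : ℕ}

section WalkCount

variable (R : Type*) [Semiring R]

theorem adjMatrix_pow_apply_eq_zero_of_lt_dist (h : n < G.dist u v) :
    (G.adjMatrix R ^ n) u v = 0 := by
  rw [adjMatrix_pow_apply_eq_card_walk, Fintype.card_eq_zero_iff.mpr ?_, Nat.cast_zero]
  exact ⟨fun ⟨p, hp⟩ => (dist_le p).not_gt (hp ▸ h)⟩

theorem adjMatrix_pow_apply_eq_zero_of_odd (huv : G.Reachable u v)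
    (hodd : Odd (n + G.dist u v)) (hg : ((n + G.dist u v : ℕ) : ℕ∞) < G.egirth) :
    (G.adjMatrix R ^ n) u v = 0 := by
  rw [adjMatrix_pow_apply_eq_card_walk, Fintype.card_eq_zero_iff.mpr ?_, Nat.cast_zero]
  obtain ⟨q, hq⟩ := huv.exists_walk_length_eq_dist
  refine ⟨fun ⟨p, hp⟩ => hg.not_ge ?_⟩
  simp only [Set.mem_ofPred_eq] at hp
  have := p.egirth_le_length_add_length_of_odd q (q.isPath_of_length_eq_dist hq) (by rwa [hp, hq])
  rwa [hp, hq] at this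

theorem adjMatrix_pow_dist_apply_eq_one (huv : G.Reachable u v)
    (hg : ((2 * G.dist u v : ℕ) : ℕ∞) < G.egirth) :
    (G.adjMatrix R ^ G.dist u v) u v = 1 := by
  rw [adjMatrix_pow_apply_eq_card_walk, Fintype.card_eq_one_iff.mpr ?_, Nat.cast_one]
  obtain ⟨q, hq⟩ := huv.exists_walk_length_eq_dist
  refine ⟨⟨q, hq⟩, fun ⟨p, hp⟩ => Subtype.ext ?_⟩
  simp only [Set.mem_ofPred_eq] at hp
  by_contra hne
  obtain ⟨_, _, _, c, hc, hcl⟩ :=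
    (p.isPath_of_length_eq_dist hp).exists_isCycle_length_le_add_of_ne
      (q.isPath_of_length_eq_dist hq) hne
  exact hg.not_ge ((egirth_le_length hc).trans (by norm_cast; omega))

theorem adjMatrix_pow_apply_eq_ite (huv : G.Reachable u v) (hn : n ≤ G.dist u v + 1)
    (hg : ((2 * n : ℕ) : ℕ∞) < G.egirth) :
    (G.adjMatrix R ^ n) u v = if G.dist u v = n then 1 else 0 := by
  split_ifs with h
  · subst h
    exact adjMatrix_pow_dist_apply_eq_one R huv hg
  obtain h | h := lt_or_gt_of_ne h
  · exact adjMatrix_pow_apply_eq_zero_of_odd R huv ⟨G.dist u v, by omega⟩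
      (lt_of_le_of_lt (by norm_cast; omega) hg)
  · exact adjMatrix_pow_apply_eq_zero_of_lt_dist R h

theorem adjMatrix_pow_dist_apply_ne_zero [CharZero R] (huv : G.Reachable u v) :
    (G.adjMatrix R ^ G.dist u v) u v ≠ 0 := by
  obtain ⟨p, hp⟩ := huv.exists_walk_length_eq_dist
  rw [adjMatrix_pow_apply_eq_card_walk, Nat.cast_ne_zero, ← Nat.pos_iff_ne_zero,
    Fintype.card_pos_iff]
  exact ⟨⟨p, hp⟩⟩

end WalkCount

theorem aeval_adjMatrix_apply {R : Type*} [CommSemiring R] {p : R[X]}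
    (hp : p.natDegree ≤ G.dist u v + 1) :
    aeval (G.adjMatrix R) p u v = p.coeff (G.dist u v) * (G.adjMatrix R ^ G.dist u v) u v +
      p.coeff (G.dist u v + 1) * (G.adjMatrix R ^ (G.dist u v + 1)) u v := by
  rw [aeval_eq_sum_range' (Nat.lt_succ_of_le hp), Matrix.sum_apply, sum_range_succ, sum_range_succ,
    sum_eq_zero fun j hj => ?_, zero_add]
  · simp only [Matrix.smul_apply, smul_eq_mul]
  · rw [Matrix.smul_apply, adjMatrix_pow_apply_eq_zero_of_lt_dist R (mem_range.mp hj), smul_zero]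

theorem Reachable.dist_lt_natDegree_of_aeval_adjMatrix_eq_zero {R : Type*} [CommRing R]
    [CharZero R] (huv : G.Reachable u v) {p : R[X]} (hp : p.Monic)
    (hA : aeval (G.adjMatrix R) p = 0) : G.dist u v < p.natDegree := by
  by_contra! h
  have hr : (X ^ G.dist u v %ₘ p).degree < G.dist u v :=
    (degree_modByMonic_lt _ hp).trans_le (degree_le_natDegree.trans (by exact_mod_cast h))
  have := aeval_adjMatrix_apply (u := u) (v := v)
    (natDegree_le_of_degree_le (hr.le.trans (by exact_mod_cast Nat.le_succ _)))
  rw [aeval_modByMonic_eq_self_of_root hA, aeval_X_pow, coeff_eq_zero_of_degree_lt hr,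
    coeff_eq_zero_of_degree_lt (hr.trans (by exact_mod_cast Nat.lt_succ_self _))] at this
  simp only [zero_mul, add_zero] at this
  exact adjMatrix_pow_dist_apply_ne_zero R huv this

theorem IsRegularOfDegree.hasEigenvalue_toLin'_adjMatrix [Nonempty V] {k : ℕ}
    (hreg : G.IsRegularOfDegree k) :
    Module.End.HasEigenvalue (toLin' (G.adjMatrix ℝ)) k := by
  refine Module.End.hasEigenvalue_of_hasEigenvector (x := fun _ => 1) ⟨?_, ?_⟩
  · rw [Module.End.mem_eigenspace_iff, toLin'_apply]
    ext u
    simp [hreg u]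
  · exact fun h => one_ne_zero (congrFun h (Classical.arbitrary V))

theorem Connected.apply_eq_of_adjMatrix_mulVec_eq_smul (hconn : G.Connected) {k : ℕ}
    (hreg : G.IsRegularOfDegree k) {x : V → ℝ} (hx : G.adjMatrix ℝ *ᵥ x = (k : ℝ) • x)
    (i j : V) : x i = x j := by
  refine (lapMatrix_mulVec_eq_zero_iff_forall_reachable G).mp ?_ i j (hconn i j)
  ext w
  have := congrFun hx w
  rw [adjMatrix_mulVec_apply] at this
  rw [lapMatrix_mulVec_apply, this, hreg w]
  simp

theorem Connected.aeval_adjMatrix_apply_eq (hconn : G.Connected) {k : ℕ}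
    (hreg : G.IsRegularOfDegree k) {q : ℝ[X]}
    (hq : aeval (G.adjMatrix ℝ) ((X - C (k : ℝ)) * q) = 0) (u v u' v' : V) :
    aeval (G.adjMatrix ℝ) q u v = aeval (G.adjMatrix ℝ) q u' v' := by
  set B := aeval (G.adjMatrix ℝ) q
  have hAB : G.adjMatrix ℝ * B = (k : ℝ) • B := by
    rwa [map_mul, map_sub, aeval_X, aeval_C, sub_mul, sub_eq_zero,
      Algebra.algebraMap_eq_smul_one, smul_mul_assoc, one_mul] at hq
  have hcol (w w' x : V) : B w x = B w' x :=
    hconn.apply_eq_of_adjMatrix_mulVec_eq_smul hreg (x := fun w => B w x)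
      (funext fun w => congrFun (congrFun hAB w) x) w w'
  have hB : B.IsSymm := (isSymm_adjMatrix G).aeval q
  rw [hcol u u' v, ← hB.apply, hcol v v' u', hB.apply]

end SimpleGraph

namespace DRG

variable {V : Type*} [Fintype V] [DecidableEq V] {G : SimpleGraph V} {u v : V}

theorem cNum_zero_self (u : V) : cNum G 0 u u = 0 := by
  simp only [cNum, card_eq_zero, eq_empty_iff_forall_notMem, sphere, mem_inter, mem_filter,
    mem_univ, true_and]
  omega

theorem bNum_eq_zero {i : ℕ} (h : ∀ w, G.dist u w ≤ i) : bNum G i u v = 0 := by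
  simp only [bNum, card_eq_zero, eq_empty_iff_forall_notMem, sphere, mem_inter, mem_filter,
    mem_univ, true_and]
  exact fun w hw => (h w).not_gt (by omega)

variable [DecidableRel G.Adj]

theorem sphere_inter_sphere_one (u v : V) (j : ℕ) :
    sphere G u j ∩ sphere G v 1 = (G.neighborFinset v).filter (G.dist u · = j) := by
  ext w
  simp only [sphere, mem_inter, mem_filter, mem_univ, true_and, mem_neighborFinset,
    dist_eq_one_iff_adj, G.adj_comm v]
  exact and_comm

theorem card_sphere_inter_sphere_one_eq_adjMatrix_pow_succ_apply {R : Type*} [Semiring R]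
    {n j : ℕ}
    (h : ∀ w, G.Adj v w → (G.adjMatrix R ^ n) u w = if G.dist u w = j then 1 else 0) :
    (#(sphere G u j ∩ sphere G v 1) : R) = (G.adjMatrix R ^ (n + 1)) u v := by
  rw [pow_succ, mul_adjMatrix_apply, sum_congr rfl fun w hw => h w ((mem_neighborFinset ..).mp hw),
    sum_boole, sphere_inter_sphere_one]

theorem cNum_add_aNum_add_bNum {k : ℕ} (hreg : G.IsRegularOfDegree k) (huv : G.Reachable u v) :
    cNum G (G.dist u v) u v + aNum G (G.dist u v) u v + bNum G (G.dist u v) u v = k := by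
  have hw (w : V) (hw : w ∈ G.neighborFinset v) :
      ((if G.dist u w = G.dist u v - 1 then 1 else 0) + (if G.dist u w = G.dist u v then 1 else 0)
        + if G.dist u w = G.dist u v + 1 then 1 else 0) = 1 := by
    rw [mem_neighborFinset] at hw
    by_cases h0 : G.dist u v = 0
    · obtain rfl := huv.dist_eq_zero_iff.mp h0
      simp [dist_eq_one_iff_adj.mpr hw]
    · rcases hw.diff_dist_adj (u := u) with h | h | h <;> split_ifs <;> omega
  rw [cNum, aNum, bNum, sphere_inter_sphere_one, sphere_inter_sphere_one, sphere_inter_sphere_one,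
    card_filter, card_filter, card_filter, ← sum_add_distrib, ← sum_add_distrib,
    sum_congr rfl hw, sum_const, smul_eq_mul, mul_one]
  exact hreg v

theorem adjMatrix_pow_dist_apply_eq_of_dist_eq {d : ℕ} {q : ℝ[X]} (hconn : G.Connected)
    (hg : ((2 * d - 1 : ℕ) : ℕ∞) ≤ G.egirth) (hq : q.Monic) (hqd : q.natDegree = d)
    (hB : ∀ u v u' v', aeval (G.adjMatrix ℝ) q u v = aeval (G.adjMatrix ℝ) q u' v')
    {u' v' : V} (h : G.dist u v = G.dist u' v') (hd : G.dist u v ≤ d) :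
    (G.adjMatrix ℝ ^ G.dist u v) u v = (G.adjMatrix ℝ ^ G.dist u' v') u' v' := by
  obtain hd | hd := hd.lt_or_eq
  · have hg' : ((2 * G.dist u v : ℕ) : ℕ∞) < G.egirth :=
      lt_of_lt_of_le (by norm_cast; omega) hg
    rw [adjMatrix_pow_dist_apply_eq_one ℝ (hconn u v) hg',
      adjMatrix_pow_dist_apply_eq_one ℝ (hconn u' v') (h ▸ hg')]
  · have key {x y : V} (hxy : G.dist x y = d) :
        aeval (G.adjMatrix ℝ) q x y = (G.adjMatrix ℝ ^ G.dist x y) x y := by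
      rw [aeval_adjMatrix_apply (by omega), hxy, ← hqd, hq.coeff_natDegree,
        coeff_eq_zero_of_natDegree_lt (Nat.lt_succ_self _)]
      ring
    rw [← key hd, ← key (h ▸ hd), hB]

theorem adjMatrix_pow_succ_dist_apply_eq_of_dist_eq {d : ℕ} {q : ℝ[X]} (hconn : G.Connected)
    (hg : ((2 * d - 1 : ℕ) : ℕ∞) ≤ G.egirth) (hq : q.Monic) (hqd : q.natDegree = d)
    (hB : ∀ u v u' v', aeval (G.adjMatrix ℝ) q u v = aeval (G.adjMatrix ℝ) q u' v')
    {u' v' : V} (h : G.dist u v = G.dist u' v') (hd : G.dist u v < d) :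
    (G.adjMatrix ℝ ^ (G.dist u v + 1)) u v = (G.adjMatrix ℝ ^ (G.dist u' v' + 1)) u' v' := by
  have hg' : ((2 * G.dist u v : ℕ) : ℕ∞) < G.egirth := lt_of_lt_of_le (by norm_cast; omega) hg
  obtain hd | hd := (Nat.succ_le_of_lt hd).lt_or_eq
  · have hg'' : ((G.dist u v + 1 + G.dist u v : ℕ) : ℕ∞) < G.egirth :=
      lt_of_lt_of_le (by norm_cast; omega) hg
    rw [adjMatrix_pow_apply_eq_zero_of_odd ℝ (hconn u v) ⟨G.dist u v, by ring⟩ hg'',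
      adjMatrix_pow_apply_eq_zero_of_odd ℝ (hconn u' v') ⟨G.dist u' v', by ring⟩ (h ▸ hg'')]
  · have key {x y : V} (hxy : G.dist x y + 1 = d)
        (hg' : ((2 * G.dist x y : ℕ) : ℕ∞) < G.egirth) :
        (G.adjMatrix ℝ ^ (G.dist x y + 1)) x y =
          aeval (G.adjMatrix ℝ) q x y - q.coeff (d - 1) := by
      rw [aeval_adjMatrix_apply (by omega), adjMatrix_pow_dist_apply_eq_one ℝ (hconn x y) hg',
        show G.dist x y = d - 1 by omega, show d - 1 + 1 = d by omega, ← hqd, hq.coeff_natDegree]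
      ring
    rw [key hd hg', key (h ▸ hd) (h ▸ hg'), hB]

theorem cNum_eq_of_dist_eq {d : ℕ} {q : ℝ[X]} (hconn : G.Connected)
    (hg : ((2 * d - 1 : ℕ) : ℕ∞) ≤ G.egirth) (hdiam : ∀ u v, G.dist u v ≤ d)
    (hq : q.Monic) (hqd : q.natDegree = d)
    (hB : ∀ u v u' v', aeval (G.adjMatrix ℝ) q u v = aeval (G.adjMatrix ℝ) q u' v')
    {u' v' : V} (h : G.dist u v = G.dist u' v') :
    cNum G (G.dist u v) u v = cNum G (G.dist u' v') u' v' := by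
  by_cases h0 : G.dist u v = 0
  · obtain rfl := (hconn u v).dist_eq_zero_iff.mp h0
    obtain rfl := (hconn u' v').dist_eq_zero_iff.mp (h ▸ h0)
    rw [dist_self, dist_self, cNum_zero_self, cNum_zero_self]
  have hc {x y : V} (hxy : G.dist x y ≠ 0) :
      (cNum G (G.dist x y) x y : ℝ) = (G.adjMatrix ℝ ^ G.dist x y) x y := by
    rw [cNum, ← Nat.sub_add_cancel (Nat.pos_of_ne_zero hxy)]
    refine card_sphere_inter_sphere_one_eq_adjMatrix_pow_succ_apply fun w hw =>
      adjMatrix_pow_apply_eq_ite ℝ (hconn x w) ?_ (lt_of_lt_of_le ?_ hg)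
    · rcases hw.diff_dist_adj (u := x) with h | h | h <;> omega
    · have := hdiam x y
      norm_cast
      omega
  exact_mod_cast (hc h0).trans
    ((adjMatrix_pow_dist_apply_eq_of_dist_eq hconn hg hq hqd hB h (hdiam u v)).trans
      (hc (h ▸ h0)).symm)

theorem aNum_eq_of_dist_eq_of_lt {d : ℕ} {q : ℝ[X]} (hconn : G.Connected)
    (hg : ((2 * d - 1 : ℕ) : ℕ∞) ≤ G.egirth) (hq : q.Monic) (hqd : q.natDegree = d)
    (hB : ∀ u v u' v', aeval (G.adjMatrix ℝ) q u v = aeval (G.adjMatrix ℝ) q u' v')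
    {u' v' : V} (h : G.dist u v = G.dist u' v') (hd : G.dist u v < d) :
    aNum G (G.dist u v) u v = aNum G (G.dist u' v') u' v' := by
  have ha {x y : V} (hxy : G.dist x y < d) :
      (aNum G (G.dist x y) x y : ℝ) = (G.adjMatrix ℝ ^ (G.dist x y + 1)) x y := by
    refine card_sphere_inter_sphere_one_eq_adjMatrix_pow_succ_apply fun w hw =>
      adjMatrix_pow_apply_eq_ite ℝ (hconn x w) ?_ (lt_of_lt_of_le (by norm_cast; omega) hg)
    rcases hw.diff_dist_adj (u := x) with h | h | h <;> omega
  exact_mod_cast (ha hd).trans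
    ((adjMatrix_pow_succ_dist_apply_eq_of_dist_eq hconn hg hq hqd hB h hd).trans
      (ha (h ▸ hd)).symm)

theorem isDistanceRegular_of_aeval_adjMatrix_apply_eq {d k : ℕ} {q : ℝ[X]}
    (hconn : G.Connected) (hreg : G.IsRegularOfDegree k)
    (hg : ((2 * d - 1 : ℕ) : ℕ∞) ≤ G.egirth) (hdiam : ∀ u v, G.dist u v ≤ d)
    (hq : q.Monic) (hqd : q.natDegree = d)
    (hB : ∀ u v u' v', aeval (G.adjMatrix ℝ) q u v = aeval (G.adjMatrix ℝ) q u' v') :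
    IsDistanceRegular G := by
  rintro i u v u' v' rfl h
  have hc := cNum_eq_of_dist_eq hconn hg hdiam hq hqd hB h.symm
  have hsum := cNum_add_aNum_add_bNum hreg (hconn u v)
  have hsum' := cNum_add_aNum_add_bNum hreg (hconn u' v')
  rw [h] at hc hsum'
  obtain hd | hd := (hdiam u v).lt_or_eq
  · have ha := aNum_eq_of_dist_eq_of_lt hconn hg hq hqd hB h.symm hd
    rw [h] at ha
    exact ⟨hc, ha, by omega⟩
  · have hb := bNum_eq_zero (i := G.dist u v) (v := v) fun w => hd ▸ hdiam u w
    have hb' := bNum_eq_zero (i := G.dist u v) (v := v') fun w => hd ▸ hdiam u' w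
    exact ⟨hc, by omega, by omega⟩

end DRG

/-- A regular connected graph with `d+1` distinct eigenvalues and girth `g ≥ 2d-1` is
distance-regular. -/
theorem statement2 {V : Type*} [Fintype V] [DecidableEq V] (G : SimpleGraph V)
    [DecidableRel G.Adj] (hconn : G.Connected) (k : ℕ) (hreg : G.IsRegularOfDegree k)
    (d : ℕ) (hev : DRG.HasDistinctEigenvalues G (d + 1))
    (hg : ((2 * d - 1 : ℕ) : ℕ∞) ≤ G.egirth) :
    DRG.IsDistanceRegular G := by
  obtain ⟨s, hcard, hs⟩ := hev
  have : Nonempty V := hconn.nonempty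
  have hmonic (t : Finset ℝ) : (∏ μ ∈ t, (X - C μ)).Monic :=
    monic_prod_of_monic _ _ fun μ _ => monic_X_sub_C μ
  have hks : (k : ℝ) ∈ s := (hs k).2 hreg.hasEigenvalue_toLin'_adjMatrix
  have hann : aeval (G.adjMatrix ℝ) (∏ μ ∈ s, (X - C μ)) = 0 :=
    (isHermitian_adjMatrix ℝ G).aeval_prod_X_sub_C_eq_zero fun μ hμ =>
      (hs μ).2 (by rwa [DRG.adjEnd, Module.End.hasEigenvalue_iff_mem_spectrum, spectrum_toLin'])
  have hdiam (u v : V) : G.dist u v ≤ d := by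
    have := (hconn u v).dist_lt_natDegree_of_aeval_adjMatrix_eq_zero (hmonic s) hann
    rwa [natDegree_finsetProd_X_sub_C_eq_card, hcard, Nat.lt_succ_iff] at this
  refine DRG.isDistanceRegular_of_aeval_adjMatrix_apply_eq hconn hreg hg hdiam
    (hmonic (s.erase (k : ℝ))) ?_
    (hconn.aeval_adjMatrix_apply_eq hreg (by rwa [mul_prod_erase s (fun μ => X - C μ) hks]))
  rw [natDegree_finsetProd_X_sub_C_eq_card, card_erase_of_mem hks, hcard, Nat.add_sub_cancel]
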